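/- There exists a complex number c such that Σ_{k=2}^{n−1} (−1)^k (k+1/2)^{iπ/2} = −((−1)^n/2)·(n−1/2)^{iπ/2} + c + O(1/n) as n → ∞. -/

import Mathlib

/-!
With `g k = (k + 1/2)^w`, `w = iπ/2`, the expression is, up to a constant, the mean
`A m = (S m + S (m + 1)) / 2` of consecutive partial sums `S m = ∑ k < m, (-1)^k g k`, at
`m = n - 1`. Over two steps `A` moves by half a second difference of `g`, which is `O(1/m²)` by
the mean value theorem and so telescopes to `O(1/m)`; a single step moves it by half a first
difference, `O(1/m)`. Hence `A` is Cauchy and its limit `c` satisfies `‖A m - c‖ = O(1/m)`.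
-/

open Finset Real Filter Topology

lemma hasDerivAt_ofReal_cpow_const_of_pos (w : ℂ) {t : ℝ} (ht : 0 < t) :
    HasDerivAt (fun s : ℝ => (s : ℂ) ^ w) (w * (t : ℂ) ^ (w - 1)) t :=
  (Complex.hasStrictDerivAt_cpow_const
    (Complex.ofReal_mem_slitPlane.2 ht)).hasDerivAt.comp_ofReal

lemma norm_cpow_add_one_sub_cpow_le {w : ℂ} (hw : w.re ≤ 1) {x : ℝ} (hx : 0 < x) :
    ‖((x : ℂ) + 1) ^ w - (x : ℂ) ^ w‖ ≤ ‖w‖ * x ^ (w.re - 1) := by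
  have key := (convex_Icc x (x + 1)).norm_image_sub_le_of_norm_hasDerivWithin_le
    (f := fun s : ℝ => (s : ℂ) ^ w) (C := ‖w‖ * x ^ (w.re - 1))
    (fun t ht => (hasDerivAt_ofReal_cpow_const_of_pos w (hx.trans_le ht.1)).hasDerivWithinAt)
    (fun t ht => ?_) (Set.left_mem_Icc.2 (by linarith))
    (Set.right_mem_Icc.2 (by linarith))
  · simpa using key
  · have ht0 : 0 < t := hx.trans_le ht.1
    rw [norm_mul, Complex.norm_cpow_eq_rpow_re_of_pos ht0, Complex.sub_re, Complex.one_re]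
    exact mul_le_mul_of_nonneg_left (Real.rpow_le_rpow_of_nonpos hx ht.1 (by linarith))
      (norm_nonneg w)

lemma norm_cpow_add_two_sub_two_mul_cpow_add_one_add_cpow_le {w : ℂ} (hw : w.re ≤ 2) {x : ℝ}
    (hx : 0 < x) :
    ‖((x : ℂ) + 2) ^ w - 2 * ((x : ℂ) + 1) ^ w + (x : ℂ) ^ w‖
      ≤ ‖w‖ * ‖w - 1‖ * x ^ (w.re - 2) := by
  have hderiv (t : ℝ) (ht : 0 < t) :
      HasDerivAt (fun s : ℝ => ((s + 1 : ℝ) : ℂ) ^ w - (s : ℂ) ^ w)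
      (w * (((t + 1 : ℝ) : ℂ) ^ (w - 1) - (t : ℂ) ^ (w - 1))) t := by
    rw [mul_sub]
    exact ((hasDerivAt_ofReal_cpow_const_of_pos w (by linarith)).comp_add_const t 1).sub
      (hasDerivAt_ofReal_cpow_const_of_pos w ht)
  have key := (convex_Icc x (x + 1)).norm_image_sub_le_of_norm_hasDerivWithin_le
    (C := ‖w‖ * ‖w - 1‖ * x ^ (w.re - 2))
    (fun t ht => (hderiv t (hx.trans_le ht.1)).hasDerivWithinAt)
    (fun t ht => ?_) (Set.left_mem_Icc.2 (by linarith))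
    (Set.right_mem_Icc.2 (by linarith))
  · convert key using 1
    · push_cast
      rw [add_assoc, one_add_one_eq_two]
      congr 1
      ring
    · simp
  · have ht0 : 0 < t := hx.trans_le ht.1
    have hdiff := norm_cpow_add_one_sub_cpow_le (w := w - 1)
      (by rw [Complex.sub_re, Complex.one_re]; linarith) ht0
    rw [Complex.sub_re, Complex.one_re, sub_sub, one_add_one_eq_two] at hdiff
    push_cast
    rw [norm_mul, mul_assoc]
    refine mul_le_mul_of_nonneg_left (hdiff.trans ?_) (norm_nonneg w)
    exact mul_le_mul_of_nonneg_left (Real.rpow_le_rpow_of_nonpos hx ht.1 (by linarith))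
      (norm_nonneg _)

lemma exists_norm_sub_le_of_norm_sub_le {E : Type*} [NormedAddCommGroup E] [CompleteSpace E]
    {u : ℕ → E} {b : ℕ → ℝ} {N : ℕ} (hb : Tendsto b atTop (𝓝 0))
    (h : ∀ n ≥ N, ∀ m ≥ n, ‖u m - u n‖ ≤ b n) : ∃ c, ∀ n ≥ N, ‖u n - c‖ ≤ b n := by
  have hu : CauchySeq u := by
    refine (cauchySeq_shift N).1 (cauchySeq_of_le_tendsto_0' (fun n => b (n + N)) ?_ ?_)
    · intro n m hnm
      rw [dist_comm, dist_eq_norm]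
      exact h _ (by omega) _ (by omega)
    · exact hb.comp (tendsto_add_atTop_nat N)
  obtain ⟨c, hc⟩ := cauchySeq_tendsto_of_complete hu
  refine ⟨c, fun n hn => ?_⟩
  rw [norm_sub_rev]
  refine le_of_tendsto ((hc.sub_const (u n)).norm) ?_
  filter_upwards [eventually_ge_atTop n] with m hm using h n hn m hm

lemma norm_sub_le_of_norm_add_two_sub_le {E : Type*} [SeminormedAddCommGroup E] {u : ℕ → E}
    {φ : ℕ → ℝ} {N : ℕ} (h : ∀ n ≥ N, ‖u (n + 2) - u n‖ ≤ φ n - φ (n + 2)) {n : ℕ}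
    (hn : N ≤ n) (j : ℕ) : ‖u (n + 2 * j) - u n‖ ≤ φ n - φ (n + 2 * j) := by
  induction j with
  | zero => simp
  | succ j ih =>
    rw [show n + 2 * (j + 1) = n + 2 * j + 2 by ring]
    calc ‖u (n + 2 * j + 2) - u n‖
        ≤ ‖u (n + 2 * j + 2) - u (n + 2 * j)‖ + ‖u (n + 2 * j) - u n‖ :=
          norm_sub_le_norm_sub_add_norm_sub _ _ _
      _ ≤ (φ (n + 2 * j) - φ (n + 2 * j + 2)) + (φ n - φ (n + 2 * j)) :=
          add_le_add (h _ (by omega)) ih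
      _ = φ n - φ (n + 2 * j + 2) := by ring

/-- The mean `(S n + S (n + 1)) / 2` of the partial sums `S n = ∑ k < n, (-1)^k g k`. -/
noncomputable def alternatingMeanSum (g : ℕ → ℂ) (n : ℕ) : ℂ :=
  ∑ k ∈ range n, (-1) ^ k * g k + (-1) ^ n * g n / 2

section alternatingMeanSum

variable (g : ℕ → ℂ)

lemma alternatingMeanSum_succ_sub (n : ℕ) :
    alternatingMeanSum g (n + 1) - alternatingMeanSum g n
      = (-1) ^ n * (g n - g (n + 1)) / 2 := by
  simp only [alternatingMeanSum, sum_range_succ, pow_succ]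
  ring

lemma norm_alternatingMeanSum_succ_sub (n : ℕ) :
    ‖alternatingMeanSum g (n + 1) - alternatingMeanSum g n‖ = ‖g (n + 1) - g n‖ / 2 := by
  simp [alternatingMeanSum_succ_sub, norm_sub_rev]

lemma norm_alternatingMeanSum_add_two_sub (n : ℕ) :
    ‖alternatingMeanSum g (n + 2) - alternatingMeanSum g n‖
      = ‖g (n + 2) - 2 * g (n + 1) + g n‖ / 2 := by
  have h : alternatingMeanSum g (n + 2) - alternatingMeanSum g n
      = (-1) ^ n * (g (n + 2) - 2 * g (n + 1) + g n) / 2 := by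
    rw [← sub_add_sub_cancel _ (alternatingMeanSum g (n + 1)), alternatingMeanSum_succ_sub,
      alternatingMeanSum_succ_sub, pow_succ]
    ring
  simp [h]

variable {g} {C D : ℝ}

lemma norm_alternatingMeanSum_add_two_mul_sub_le
    (hC : ∀ n ≥ 1, ‖g (n + 2) - 2 * g (n + 1) + g n‖ ≤ C / n ^ 2) {n : ℕ} (hn : 2 ≤ n)
    (j : ℕ) : ‖alternatingMeanSum g (n + 2 * j) - alternatingMeanSum g n‖ ≤ C / n := by
  have hC0 : 0 ≤ C := by simpa using (norm_nonneg _).trans (hC 1 le_rfl)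
  set φ : ℕ → ℝ := fun k => C / (2 * ((k : ℝ) - 1))
  have hstep (k : ℕ) (hk : k ≥ 2) :
      ‖alternatingMeanSum g (k + 2) - alternatingMeanSum g k‖ ≤ φ k - φ (k + 2) := by
    have hk' : (2 : ℝ) ≤ k := by exact_mod_cast hk
    have hφ : φ k - φ (k + 2) = C / ((k : ℝ) - 1) / (k + 1) := by
      have : (k : ℝ) - 1 ≠ 0 := by linarith
      have : (k : ℝ) + 1 ≠ 0 := by linarith
      simp only [φ]
      rw [show ((k + 2 : ℕ) : ℝ) - 1 = k + 1 by push_cast; ring]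
      field_simp
      ring
    calc ‖alternatingMeanSum g (k + 2) - alternatingMeanSum g k‖
        ≤ ‖g (k + 2) - 2 * g (k + 1) + g k‖ := by
          rw [norm_alternatingMeanSum_add_two_sub]
          exact half_le_self (norm_nonneg _)
      _ ≤ C / k ^ 2 := hC k (by omega)
      _ ≤ C / ((k : ℝ) - 1) / (k + 1) := by
          rw [div_div]
          exact div_le_div_of_nonneg_left hC0 (by nlinarith) (by nlinarith)
      _ = φ k - φ (k + 2) := hφ.symm
  have hn' : (2 : ℝ) ≤ n := by exact_mod_cast hn
  have hφ0 : 0 ≤ φ (n + 2 * j) :=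
    div_nonneg hC0 (by push_cast; linarith [j.cast_nonneg (α := ℝ)])
  calc ‖alternatingMeanSum g (n + 2 * j) - alternatingMeanSum g n‖
      ≤ φ n - φ (n + 2 * j) := norm_sub_le_of_norm_add_two_sub_le hstep hn j
    _ ≤ φ n := sub_le_self _ hφ0
    _ ≤ C / n := div_le_div_of_nonneg_left hC0 (by positivity) (by linarith)

lemma norm_alternatingMeanSum_sub_le (hD : ∀ n ≥ 1, ‖g (n + 1) - g n‖ ≤ D / n)
    (hC : ∀ n ≥ 1, ‖g (n + 2) - 2 * g (n + 1) + g n‖ ≤ C / n ^ 2) {n m : ℕ} (hn : 2 ≤ n)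
    (hnm : n ≤ m) : ‖alternatingMeanSum g m - alternatingMeanSum g n‖ ≤ (C + D) / n := by
  have hC0 : 0 ≤ C := by simpa using (norm_nonneg _).trans (hC 1 le_rfl)
  have hD0 : 0 ≤ D := by simpa using (norm_nonneg _).trans (hD 1 le_rfl)
  have hn' : (0 : ℝ) < n := by positivity
  obtain ⟨j, rfl | rfl⟩ : ∃ j, m = n + 2 * j ∨ m = n + 1 + 2 * j := by
    obtain ⟨j, hj | hj⟩ := Nat.even_or_odd' (m - n)
    exacts [⟨j, .inl (by omega)⟩, ⟨j, .inr (by omega)⟩]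
  · exact (norm_alternatingMeanSum_add_two_mul_sub_le hC hn j).trans
      (div_le_div_of_nonneg_right (by linarith) hn'.le)
  · have hodd := norm_alternatingMeanSum_add_two_mul_sub_le hC (n := n + 1) (by omega) j
    have hstep := norm_alternatingMeanSum_succ_sub g n
    calc _ ≤ ‖alternatingMeanSum g (n + 1 + 2 * j) - alternatingMeanSum g (n + 1)‖
          + ‖alternatingMeanSum g (n + 1) - alternatingMeanSum g n‖ :=
          norm_sub_le_norm_sub_add_norm_sub _ _ _
      _ ≤ C / n + D / n := by
          gcongr
          · exact hodd.trans (div_le_div_of_nonneg_left hC0 hn' (by push_cast; linarith))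
          · rw [hstep]
            exact (half_le_self (norm_nonneg _)).trans (hD n (by omega))
      _ = (C + D) / n := by ring

lemma exists_norm_alternatingMeanSum_sub_le (hD : ∀ n ≥ 1, ‖g (n + 1) - g n‖ ≤ D / n)
    (hC : ∀ n ≥ 1, ‖g (n + 2) - 2 * g (n + 1) + g n‖ ≤ C / n ^ 2) :
    ∃ c, ∀ n ≥ 2, ‖alternatingMeanSum g n - c‖ ≤ (C + D) / n :=
  exists_norm_sub_le_of_norm_sub_le (tendsto_const_div_atTop_nhds_zero_nat _)
    fun _ hn _ hnm => norm_alternatingMeanSum_sub_le hD hC hn hnm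

end alternatingMeanSum

lemma sum_Icc_two_add_eq_alternatingMeanSum (g : ℕ → ℂ) {m : ℕ} (hm : 1 ≤ m) :
    ∑ k ∈ Icc 2 m, (-1) ^ k * g k + (-1) ^ (m + 1) / 2 * g m
      = alternatingMeanSum g m - (g 0 - g 1) := by
  have h := sum_range_add_sum_Ico (fun k => (-1 : ℂ) ^ k * g k) (show 2 ≤ m + 1 by omega)
  rw [Ico_add_one_right_eq_Icc, sum_range_succ _ m] at h
  simp only [sum_range_succ, sum_range_zero] at h
  rw [alternatingMeanSum]
  linear_combination h

lemma norm_natCast_add_half_cpow_succ_sub_le {w : ℂ} (hw : w.re ≤ 0) {n : ℕ} (hn : 1 ≤ n) :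
    ‖(((n + 1 : ℕ) : ℂ) + 1 / 2) ^ w - ((n : ℂ) + 1 / 2) ^ w‖ ≤ ‖w‖ / n := by
  have hn' : (1 : ℝ) ≤ n := by exact_mod_cast hn
  have hx : (1 : ℝ) ≤ n + 1 / 2 := by linarith
  rw [show ((n + 1 : ℕ) : ℂ) + 1 / 2 = ((n + 1 / 2 : ℝ) : ℂ) + 1 by push_cast; ring,
    show (n : ℂ) + 1 / 2 = ((n + 1 / 2 : ℝ) : ℂ) by push_cast; ring]
  calc _ ≤ ‖w‖ * ((n : ℝ) + 1 / 2) ^ (w.re - 1) :=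
        norm_cpow_add_one_sub_cpow_le (hw.trans zero_le_one) (by linarith)
    _ ≤ ‖w‖ * ((n : ℝ) + 1 / 2) ^ (-1 : ℝ) := by gcongr; linarith
    _ ≤ ‖w‖ / n := by
        rw [Real.rpow_neg_one, ← div_eq_mul_inv]
        gcongr
        linarith

lemma norm_natCast_add_half_cpow_add_two_sub_le {w : ℂ} (hw : w.re ≤ 0) {n : ℕ} (hn : 1 ≤ n) :
    ‖(((n + 2 : ℕ) : ℂ) + 1 / 2) ^ w - 2 * (((n + 1 : ℕ) : ℂ) + 1 / 2) ^ w
      + ((n : ℂ) + 1 / 2) ^ w‖ ≤ ‖w‖ * ‖w - 1‖ / n ^ 2 := by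
  have hn' : (1 : ℝ) ≤ n := by exact_mod_cast hn
  have hx : (1 : ℝ) ≤ n + 1 / 2 := by linarith
  rw [show ((n + 2 : ℕ) : ℂ) + 1 / 2 = ((n + 1 / 2 : ℝ) : ℂ) + 2 by push_cast; ring,
    show ((n + 1 : ℕ) : ℂ) + 1 / 2 = ((n + 1 / 2 : ℝ) : ℂ) + 1 by push_cast; ring,
    show (n : ℂ) + 1 / 2 = ((n + 1 / 2 : ℝ) : ℂ) by push_cast; ring]
  calc _ ≤ ‖w‖ * ‖w - 1‖ * ((n : ℝ) + 1 / 2) ^ (w.re - 2) :=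
        norm_cpow_add_two_sub_two_mul_cpow_add_one_add_cpow_le (by linarith) (by linarith)
    _ ≤ ‖w‖ * ‖w - 1‖ * ((n : ℝ) + 1 / 2) ^ (-2 : ℝ) := by gcongr; linarith
    _ ≤ ‖w‖ * ‖w - 1‖ / n ^ 2 := by
        rw [Real.rpow_neg (by linarith), Real.rpow_two, ← div_eq_mul_inv]
        gcongr
        linarith

theorem sum_S0_asymptotics :
    ∃ c : ℂ, ∃ A > (0 : ℝ), ∃ N : ℕ, ∀ n : ℕ, n ≥ N →
      ‖(∑ k ∈ Finset.Icc 2 (n - 1), (-1 : ℂ)^k * ((k : ℂ) + 1/2) ^ (Complex.I * (π : ℂ)/2))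
        - (-((-1 : ℂ)^n / 2) * ((n : ℂ) - 1/2) ^ (Complex.I * (π : ℂ)/2) + c)‖
        ≤ A / (n : ℝ) := by
  set w : ℂ := Complex.I * π / 2
  set g : ℕ → ℂ := fun k => ((k : ℂ) + 1 / 2) ^ w
  have hw : w.re ≤ 0 := by simp [w]
  obtain ⟨c, hc⟩ := exists_norm_alternatingMeanSum_sub_le (g := g)
    (fun _ hn => norm_natCast_add_half_cpow_succ_sub_le hw hn)
    (fun _ hn => norm_natCast_add_half_cpow_add_two_sub_le hw hn)
  set B := ‖w‖ * ‖w - 1‖ + ‖w‖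
  refine ⟨c - (g 0 - g 1), 2 * B + 1, by positivity, 3, fun n hn => ?_⟩
  obtain ⟨m, rfl⟩ : ∃ m, n = m + 1 := ⟨n - 1, by omega⟩
  have hm : (2 : ℝ) ≤ m := by exact_mod_cast (show 2 ≤ m by omega)
  calc _ = ‖(∑ k ∈ Icc 2 m, (-1) ^ k * g k + (-1) ^ (m + 1) / 2 * g m)
        - (c - (g 0 - g 1))‖ := by
        rw [Nat.add_sub_cancel, show ((m + 1 : ℕ) : ℂ) - 1 / 2 = m + 1 / 2 by push_cast; ring]
        congr 1
        ring
    _ = ‖alternatingMeanSum g m - c‖ := by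
        rw [sum_Icc_two_add_eq_alternatingMeanSum g (by omega)]
        congr 1
        ring
    _ ≤ B / m := hc m (by omega)
    _ ≤ (2 * B + 1) / (m + 1 : ℕ) := by
        rw [div_le_div_iff₀ (by positivity) (by positivity)]
        push_cast
        nlinarith [show 0 ≤ B by positivity]
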